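/- (Restriction symbol for full space-time coarsening.) Let N_t ≥ 1, R_1, R_2 ∈ ℂ^{N_t×N_t}, and N_x, N ≥ 4 even. Define R^f on space-time grid functions by (R^f u)^n_j = (1/2)[ R_1 (u^{2n−1}_{2j−1} + u^{2n−1}_{2j}) + R_2 (u^{2n}_{2j−1} + u^{2n}_{2j}) ] for n = 1,…,N/2, j = 1,…,N_x/2. Let θ_x, θ_t ∈ (−π/2,π/2] be low admissible frequencies and let ψ be the harmonic ψ^n_j = e^{i(jθ_x+nθ_t)} v_1 + e^{i(jγ(θ_x)+nθ_t)} v_2 + e^{i(jθ_x+nγ(θ_t))} v_3 + e^{i(jγ(θ_x)+nγ(θ_t))} v_4. Then for all n = 1,…,N/2 and j = 1,…,N_x/2: (R^f ψ)^n_j = e^{i(j·2θ_x + n·2θ_t)} [ 𝓡̂(θ_x,θ_t) v_1 + 𝓡̂(γ(θ_x),θ_t) v_2 + 𝓡̂(θ_x,γ(θ_t)) v_3 + 𝓡̂(γ(θ_x),γ(θ_t)) v_4 ], where 𝓡̂(θ_x,θ_t) = ((e^{−iθ_x}+1)/2)·(e^{−iθ_t} R_1 + R_2). -/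
import Mathlib



lemma expkey12 (m p : ℕ) (x t : ℝ) :
    Complex.exp (Complex.I * ((m : ℂ) * (x : ℂ) + (p : ℂ) * (t : ℂ))) =
      Complex.exp (Complex.I * (x : ℂ)) ^ m * Complex.exp (Complex.I * (t : ℂ)) ^ p := by
  rw [← Complex.exp_nat_mul, ← Complex.exp_nat_mul, ← Complex.exp_add]
  congr 1
  ring

lemma gammakey12 (γ : ℝ) (x : ℝ) (h : γ = if x < 0 then x + Real.pi else x - Real.pi) :
    Complex.exp (Complex.I * (γ : ℂ)) = -Complex.exp (Complex.I * (x : ℂ)) := by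
  have hpi : Complex.exp (Complex.I * (Real.pi : ℂ)) = -1 := by
    rw [mul_comm, Complex.exp_pi_mul_I]
  split_ifs at h with hx <;> subst h <;> push_cast
  · rw [mul_add, Complex.exp_add, hpi]; ring
  · rw [mul_sub, Complex.exp_sub, hpi]; field_simp

/-- Mapping property of the restriction for full space-time coarsening on the space of
low-frequency harmonics: `R^f` maps the harmonic with blocks `(v₁,v₂,v₃,v₄)` to the
coarse mode with coefficient `𝓡̂(θx,θt)v₁ + 𝓡̂(γθx,θt)v₂ + 𝓡̂(θx,γθt)v₃ + 𝓡̂(γθx,γθt)v₄`,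
where `𝓡̂(θx,θt) = ((e^{-iθx}+1)/2)(e^{-iθt}R₁ + R₂)`. -/
theorem stmt_12
    (Nt : ℕ) (hNt : 1 ≤ Nt)
    (R₁ R₂ : Matrix (Fin Nt) (Fin Nt) ℂ)
    (Nx N : ℕ) (hNx : 4 ≤ Nx) (hN : 4 ≤ N)
    (hNxeven : Nx % 2 = 0) (hNeven : N % 2 = 0)
    -- the full space-time coarsening restriction
    (Rf : (Fin N → Fin Nx → Fin Nt → ℂ) → Fin (N / 2) → Fin (Nx / 2) → Fin Nt → ℂ)
    (hRf : ∀ (u : Fin N → Fin Nx → Fin Nt → ℂ) (n : Fin (N / 2)) (j : Fin (Nx / 2)),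
      Rf u n j = ((1 : ℂ) / 2) •
        (R₁.mulVec (u ⟨2 * (n : ℕ), by have := n.isLt; omega⟩ ⟨2 * (j : ℕ), by have := j.isLt; omega⟩
            + u ⟨2 * (n : ℕ), by have := n.isLt; omega⟩ ⟨2 * (j : ℕ) + 1, by have := j.isLt; omega⟩)
          + R₂.mulVec (u ⟨2 * (n : ℕ) + 1, by have := n.isLt; omega⟩ ⟨2 * (j : ℕ), by have := j.isLt; omega⟩
            + u ⟨2 * (n : ℕ) + 1, by have := n.isLt; omega⟩ ⟨2 * (j : ℕ) + 1, by have := j.isLt; omega⟩)))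
    (θx θt : ℝ)
    (hθxadm : ∃ kx : ℤ, (1 - (Nx : ℤ) / 2 ≤ kx ∧ kx ≤ (Nx : ℤ) / 2) ∧
      θx = 2 * (kx : ℝ) * Real.pi / (Nx : ℝ))
    (hθtadm : ∃ kt : ℤ, (1 - (N : ℤ) / 2 ≤ kt ∧ kt ≤ (N : ℤ) / 2) ∧
      θt = 2 * (kt : ℝ) * Real.pi / (N : ℝ))
    (hθxlow : -(Real.pi / 2) < θx ∧ θx ≤ Real.pi / 2)
    (hθtlow : -(Real.pi / 2) < θt ∧ θt ≤ Real.pi / 2)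
    -- the shifting operator γ
    (γ : ℝ → ℝ) (hγ : ∀ s : ℝ, γ s = if s < 0 then s + Real.pi else s - Real.pi)
    -- the Fourier symbol 𝓡̂
    (Rhat : ℝ → ℝ → Matrix (Fin Nt) (Fin Nt) ℂ)
    (hRhat : ∀ α β : ℝ, Rhat α β =
      ((Complex.exp (-Complex.I * (α : ℂ)) + 1) / 2) •
        (Complex.exp (-Complex.I * (β : ℂ)) • R₁ + R₂))
    (v₁ v₂ v₃ v₄ : Fin Nt → ℂ)
    -- the harmonic with blocks v₁, v₂, v₃, v₄
    (ψ : Fin N → Fin Nx → Fin Nt → ℂ)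
    (hψ : ∀ (n : Fin N) (j : Fin Nx), ψ n j =
      Complex.exp (Complex.I * ((((j : ℕ) + 1 : ℕ) : ℂ) * (θx : ℂ)
        + (((n : ℕ) + 1 : ℕ) : ℂ) * (θt : ℂ))) • v₁
      + Complex.exp (Complex.I * ((((j : ℕ) + 1 : ℕ) : ℂ) * ((γ θx : ℝ) : ℂ)
        + (((n : ℕ) + 1 : ℕ) : ℂ) * (θt : ℂ))) • v₂
      + Complex.exp (Complex.I * ((((j : ℕ) + 1 : ℕ) : ℂ) * (θx : ℂ)
        + (((n : ℕ) + 1 : ℕ) : ℂ) * ((γ θt : ℝ) : ℂ))) • v₃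
      + Complex.exp (Complex.I * ((((j : ℕ) + 1 : ℕ) : ℂ) * ((γ θx : ℝ) : ℂ)
        + (((n : ℕ) + 1 : ℕ) : ℂ) * ((γ θt : ℝ) : ℂ))) • v₄) :
    ∀ (n : Fin (N / 2)) (j : Fin (Nx / 2)),
      Rf ψ n j =
        Complex.exp (Complex.I * ((((j : ℕ) + 1 : ℕ) : ℂ) * (2 * (θx : ℂ))
            + (((n : ℕ) + 1 : ℕ) : ℂ) * (2 * (θt : ℂ)))) •
          ((Rhat θx θt).mulVec v₁ + (Rhat (γ θx) θt).mulVec v₂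
            + (Rhat θx (γ θt)).mulVec v₃ + (Rhat (γ θx) (γ θt)).mulVec v₄) := by

  intro n j
  have hγx : Complex.exp (Complex.I * ((γ θx : ℝ) : ℂ)) = -Complex.exp (Complex.I * (θx : ℂ)) :=
    gammakey12 _ _ (hγ θx)
  have hγt : Complex.exp (Complex.I * ((γ θt : ℝ) : ℂ)) = -Complex.exp (Complex.I * (θt : ℂ)) :=
    gammakey12 _ _ (hγ θt)
  have ha := Complex.exp_ne_zero (Complex.I * (θx : ℂ))
  have hb := Complex.exp_ne_zero (Complex.I * (θt : ℂ))
  rw [hRf]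
  simp only [hψ, hRhat]
  rw [show (((j : ℕ) + 1 : ℕ) : ℂ) * (2 * (θx : ℂ)) + (((n : ℕ) + 1 : ℕ) : ℂ) * (2 * (θt : ℂ))
      = ((2 * (j : ℕ) + 2 : ℕ) : ℂ) * (θx : ℂ) + ((2 * (n : ℕ) + 2 : ℕ) : ℂ) * (θt : ℂ) by
    push_cast; ring]
  simp only [Matrix.mulVec_add, Matrix.mulVec_smul, Matrix.add_mulVec, Matrix.smul_mulVec]
  funext k
  simp only [Pi.add_apply, Pi.smul_apply, smul_eq_mul]
  simp only [expkey12, hγx, hγt]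
  have hneg1 : ∀ (c : ℂ) (m : ℕ), (-c) ^ (2 * m + 1) = -(c ^ (2 * m + 1)) :=
    fun c m => Odd.neg_pow ⟨m, by ring⟩ c
  have hneg2 : ∀ (c : ℂ) (m : ℕ), (-c) ^ (2 * m + 1 + 1) = c ^ (2 * m + 1 + 1) :=
    fun c m => Even.neg_pow ⟨m + 1, by ring⟩ c
  have hinvx : Complex.exp (-Complex.I * (θx : ℂ)) = (Complex.exp (Complex.I * (θx : ℂ)))⁻¹ := by
    rw [← Complex.exp_neg]; congr 1; ring
  have hinvt : Complex.exp (-Complex.I * (θt : ℂ)) = (Complex.exp (Complex.I * (θt : ℂ)))⁻¹ := by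
    rw [← Complex.exp_neg]; congr 1; ring
  have hinvgx : Complex.exp (-Complex.I * ((γ θx : ℝ) : ℂ))
      = -(Complex.exp (Complex.I * (θx : ℂ)))⁻¹ := by
    rw [show -Complex.I * ((γ θx : ℝ) : ℂ) = -(Complex.I * ((γ θx : ℝ) : ℂ)) by ring,
      Complex.exp_neg, hγx, inv_neg]
  have hinvgt : Complex.exp (-Complex.I * ((γ θt : ℝ) : ℂ))
      = -(Complex.exp (Complex.I * (θt : ℂ)))⁻¹ := by
    rw [show -Complex.I * ((γ θt : ℝ) : ℂ) = -(Complex.I * ((γ θt : ℝ) : ℂ)) by ring,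
      Complex.exp_neg, hγt, inv_neg]
  simp only [hneg1, hneg2, hinvx, hinvt, hinvgx, hinvgt]
  field_simp
  ring
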